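/- arXiv:2103.07651 — 3 statements merged into one kernel-verified Lean document; each statement's English description precedes it below -/
import Mathlib

section
/- Let α₋₁, α₀, α₁, α₂, σ > 0, ρ, θ > 1 with 1 + ρ > 2θ, and β ∈ (0,1). Define V(x) = α₋₁β x^{β−2} − α₀β x^{β−1} + α₁β x^{β} − α₂β x^{ρ+β−1} − α₋₁β x^{−2} + α₀β x^{−1} − α₁β + α₂β x^{ρ−1} + (σ²/2)β(β−1) x^{β+2θ−2} + (σ²/2)β x^{2θ−2} + λ((1+α₃)^β − 1)x^β for constants λ, α₃ > 0. Then there exists a constant K such that V(x) ≤ K for all x > 0. -/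
/-!
Every term of `V` is a multiple of a power `x ^ q`. The two terms with the extreme exponents,
`-αm1 β x ^ (-2)` and `-α2 β x ^ (ρ + β - 1)`, have negative coefficients, and every other exponent
lies strictly between `-2` and `ρ + β - 1` (for `x ^ (β + 2θ - 2)` this is `1 + ρ > 2θ`). A power
strictly between two others is, up to an additive constant, below any small multiple of their sum:
near `0` the lower power wins, near `∞` the upper one. So all the other terms are absorbed by the
two leading ones.
-/

open Real

/-- `f` is of lower order than `x ^ p + x ^ r` on `(0, ∞)`, as far as upper bounds go. -/
def IsLowerOrder (p r : ℝ) (f : ℝ → ℝ) : Prop :=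
  ∀ ε > 0, ∃ C, ∀ x > 0, f x ≤ ε * (x ^ p + x ^ r) + C

lemma exists_rpow_le_mul_rpow_add_of_le_one {p q ε : ℝ} (hpq : p < q) (hε : 0 < ε) :
    ∃ C, ∀ x, 0 < x → x ≤ 1 → x ^ q ≤ ε * x ^ p + C := by
  set δ := min 1 (ε ^ (q - p)⁻¹)
  have hδ : 0 < δ := lt_min one_pos (rpow_pos_of_pos hε _)
  refine ⟨max (δ ^ q) 1, fun x hx hx1 => ?_⟩
  rcases le_total x δ with hxδ | hδx
  · have hsmall : x ^ (q - p) ≤ ε :=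
      calc x ^ (q - p) ≤ (ε ^ (q - p)⁻¹) ^ (q - p) :=
            rpow_le_rpow hx.le (hxδ.trans (min_le_right _ _)) (by linarith)
        _ = ε := by rw [← rpow_mul hε.le, inv_mul_cancel₀ (by linarith), rpow_one]
    calc x ^ q = x ^ (q - p) * x ^ p := by rw [← rpow_add hx, sub_add_cancel]
      _ ≤ ε * x ^ p := by gcongr
      _ ≤ ε * x ^ p + max (δ ^ q) 1 := le_add_of_nonneg_right (le_max_of_le_right zero_le_one)
  · have hbound : x ^ q ≤ max (δ ^ q) 1 := by
      rcases le_total q 0 with hq | hq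
      · exact (rpow_le_rpow_of_nonpos hδ hδx hq).trans (le_max_left _ _)
      · exact (rpow_le_one hx.le hx1 hq).trans (le_max_right _ _)
    linarith [show 0 ≤ ε * x ^ p by positivity]

lemma exists_rpow_le_mul_rpow_add_of_one_le {q r ε : ℝ} (hqr : q < r) (hε : 0 < ε) :
    ∃ C, ∀ x, 1 ≤ x → x ^ q ≤ ε * x ^ r + C := by
  obtain ⟨C, hC⟩ := exists_rpow_le_mul_rpow_add_of_le_one (neg_lt_neg hqr) hε
  refine ⟨C, fun x hx => ?_⟩
  have hx0 : 0 < x := one_pos.trans_le hx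
  have hinv : ∀ s : ℝ, x⁻¹ ^ (-s) = x ^ s := fun s => by
    rw [rpow_neg (inv_nonneg.2 hx0.le), inv_rpow hx0.le, inv_inv]
  simpa only [hinv] using hC x⁻¹ (inv_pos.2 hx0) (inv_le_one_of_one_le₀ hx)

lemma isLowerOrder_rpow {p q r : ℝ} (hpq : p < q) (hqr : q < r) :
    IsLowerOrder p r fun x => x ^ q := by
  intro ε hε
  obtain ⟨C₀, hC₀⟩ := exists_rpow_le_mul_rpow_add_of_le_one hpq hε
  obtain ⟨C₁, hC₁⟩ := exists_rpow_le_mul_rpow_add_of_one_le hqr hε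
  refine ⟨max C₀ C₁, fun x hx => ?_⟩
  have hp : 0 ≤ ε * x ^ p := by positivity
  have hr : 0 ≤ ε * x ^ r := by positivity
  rcases le_total x 1 with hx1 | hx1
  · linarith [hC₀ x hx hx1, le_max_left C₀ C₁]
  · linarith [hC₁ x hx1, le_max_right C₀ C₁]

lemma isLowerOrder_mul_rpow {p q r : ℝ} (a : ℝ) (hpq : p < q) (hqr : q < r) :
    IsLowerOrder p r fun x => a * x ^ q := by
  intro ε hε
  have ha : 0 < |a| + 1 := by positivity
  obtain ⟨C, hC⟩ := isLowerOrder_rpow hpq hqr (ε / (|a| + 1)) (div_pos hε ha)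
  refine ⟨(|a| + 1) * C, fun x hx => ?_⟩
  calc a * x ^ q ≤ (|a| + 1) * x ^ q := by
        gcongr
        linarith [le_abs_self a]
    _ ≤ (|a| + 1) * (ε / (|a| + 1) * (x ^ p + x ^ r) + C) := by gcongr; exact hC x hx
    _ = ε * (x ^ p + x ^ r) + (|a| + 1) * C := by field_simp

lemma IsLowerOrder.add {p r : ℝ} {f g : ℝ → ℝ} (hf : IsLowerOrder p r f)
    (hg : IsLowerOrder p r g) : IsLowerOrder p r fun x => f x + g x := by
  intro ε hε
  obtain ⟨C, hC⟩ := hf (ε / 2) (half_pos hε)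
  obtain ⟨D, hD⟩ := hg (ε / 2) (half_pos hε)
  exact ⟨C + D, fun x hx => by linarith [hC x hx, hD x hx]⟩

lemma IsLowerOrder.exists_le_sub {p r A B : ℝ} {f : ℝ → ℝ} (hf : IsLowerOrder p r f)
    (hA : 0 < A) (hB : 0 < B) : ∃ K, ∀ x > 0, f x - A * x ^ p - B * x ^ r ≤ K := by
  obtain ⟨C, hC⟩ := hf (min A B) (lt_min hA hB)
  refine ⟨C, fun x hx => ?_⟩
  have hp : min A B * x ^ p ≤ A * x ^ p := by gcongr; exact min_le_left A B
  have hr : min A B * x ^ r ≤ B * x ^ r := by gcongr; exact min_le_right A B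
  linarith [hC x hx]

theorem V_bounded_above_general
    (αm1 α0 α1 α2 α3 σ lam ρ θ β : ℝ)
    (hαm1 : 0 < αm1) (hα2 : 0 < α2) (hθ : 1 < θ)
    (hstruct : 1 + ρ > 2 * θ) (hβ0 : 0 < β) :
    ∃ K : ℝ, ∀ x : ℝ, 0 < x →
      αm1 * β * x ^ (β - 2) - α0 * β * x ^ (β - 1) + α1 * β * x ^ β
        - α2 * β * x ^ (ρ + β - 1) - αm1 * β * x ^ (-2 : ℝ) + α0 * β * x ^ (-1 : ℝ)
        - α1 * β + α2 * β * x ^ (ρ - 1)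
        + (σ ^ 2 / 2) * β * (β - 1) * x ^ (β + 2 * θ - 2)
        + (σ ^ 2 / 2) * β * x ^ (2 * θ - 2)
        + lam * ((1 + α3) ^ β - 1) * x ^ β ≤ K := by
  have hlower : IsLowerOrder (-2) (ρ + β - 1) fun x =>
      αm1 * β * x ^ (β - 2) + -(α0 * β) * x ^ (β - 1)
        + (α1 * β + lam * ((1 + α3) ^ β - 1)) * x ^ β + α0 * β * x ^ (-1 : ℝ)
        + α2 * β * x ^ (ρ - 1) + (σ ^ 2 / 2) * β * (β - 1) * x ^ (β + 2 * θ - 2)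
        + (σ ^ 2 / 2) * β * x ^ (2 * θ - 2) :=
    ((((((isLowerOrder_mul_rpow _ (by linarith) (by linarith)).add
      (isLowerOrder_mul_rpow _ (by linarith) (by linarith))).add
      (isLowerOrder_mul_rpow _ (by linarith) (by linarith))).add
      (isLowerOrder_mul_rpow _ (by norm_num) (by linarith))).add
      (isLowerOrder_mul_rpow _ (by linarith) (by linarith))).add
      (isLowerOrder_mul_rpow _ (by linarith) (by linarith))).add
      (isLowerOrder_mul_rpow _ (by linarith) (by linarith))
  obtain ⟨K, hK⟩ := hlower.exists_le_sub (mul_pos hαm1 hβ0) (mul_pos hα2 hβ0)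
  exact ⟨K - α1 * β, fun x hx => by linear_combination hK x hx⟩

theorem V_bounded_above
    (αm1 α0 α1 α2 α3 σ lam ρ θ β : ℝ)
    (hαm1 : 0 < αm1) (hα0 : 0 < α0) (hα1 : 0 < α1) (hα2 : 0 < α2) (hα3 : 0 < α3)
    (hσ : 0 < σ) (hlam : 0 < lam) (hρ : 1 < ρ) (hθ : 1 < θ)
    (hstruct : 1 + ρ > 2 * θ) (hβ0 : 0 < β) (hβ1 : β < 1) :
    ∃ K : ℝ, ∀ x : ℝ, 0 < x →
      αm1 * β * x ^ (β - 2) - α0 * β * x ^ (β - 1) + α1 * β * x ^ β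
        - α2 * β * x ^ (ρ + β - 1) - αm1 * β * x ^ (-2 : ℝ) + α0 * β * x ^ (-1 : ℝ)
        - α1 * β + α2 * β * x ^ (ρ - 1)
        + (σ ^ 2 / 2) * β * (β - 1) * x ^ (β + 2 * θ - 2)
        + (σ ^ 2 / 2) * β * x ^ (2 * θ - 2)
        + lam * ((1 + α3) ^ β - 1) * x ^ β ≤ K :=
  V_bounded_above_general αm1 α0 α1 α2 α3 σ lam ρ θ β hαm1 hα2 hθ hstruct hβ0
end

section
/- Let f(x) = α₋₁ x^{−1} − α₀ + α₁ x − α₂ x^ρ and g(x) = x^θ with α₋₁, α₀, α₁, α₂ > 0, ρ, θ > 1 satisfying 1 + ρ > 2θ. Let φ : ℝ₊ → ℝ₊ be any function with φ(y) ≤ σ for all y > 0. Then for every p ≥ 2 there exists a constant K₄ > 0 such that x f(x) + ((p−1)/2)|φ(y) g(x)|² ≤ K₄(1 + x²) for all x, y > 0. -/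
/-!
Multiplying out, `x f(x) = α₋₁ - α₀ x + α₁ x² - α₂ x^{1+ρ}`, and the diffusion term is at most
`((p-1)/2) σ² x^{2θ}`. Since `2θ < 1 + ρ`, the superlinear damping `-α₂ x^{1+ρ}` dominates
`((p-1)/2) σ² x^{2θ}` for large `x`, so their sum is bounded above; the remaining terms are
at most linear in `1 + x²`.
-/

open Real

theorem exists_mul_rpow_sub_mul_rpow_le {a b A c : ℝ} (ha : 0 ≤ a) (hab : a < b) (hA : 0 ≤ A)
    (hc : 0 < c) : ∃ K, 0 ≤ K ∧ ∀ x, 0 < x → A * x ^ a - c * x ^ b ≤ K := by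
  set M := (A / c) ^ (1 / (b - a))
  have hM : 0 ≤ M := by positivity
  refine ⟨A * M ^ a, by positivity, fun x hx => ?_⟩
  rcases le_total x M with hxM | hMx
  · have : x ^ a ≤ M ^ a := rpow_le_rpow hx.le hxM ha
    nlinarith [rpow_nonneg hx.le b]
  · have hAc : A / c ≤ x ^ (b - a) := by
      calc A / c = M ^ (b - a) := by
            rw [← rpow_mul (by positivity), one_div_mul_cancel (sub_pos.2 hab).ne', rpow_one]
        _ ≤ x ^ (b - a) := rpow_le_rpow hM hMx (sub_pos.2 hab).le
    have hdom : A * x ^ a ≤ c * x ^ b := by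
      calc A * x ^ a ≤ c * x ^ (b - a) * x ^ a :=
            mul_le_mul_of_nonneg_right ((div_le_iff₀' hc).1 hAc) (rpow_nonneg hx.le a)
        _ = c * x ^ b := by rw [mul_assoc, ← rpow_add hx, sub_add_cancel]
    nlinarith [rpow_nonneg hM a]

theorem mul_ait_sahalia_drift {x : ℝ} (hx : 0 < x) (αm1 α0 α1 α2 ρ : ℝ) :
    x * (αm1 * x ^ (-1 : ℝ) - α0 + α1 * x - α2 * x ^ ρ)
      = αm1 - α0 * x + α1 * x ^ 2 - α2 * x ^ (1 + ρ) := by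
  have hinv : x * x ^ (-1 : ℝ) = 1 := by
    rw [rpow_neg_one, mul_inv_cancel₀ hx.ne']
  have hpow : x * x ^ ρ = x ^ (1 + ρ) := by
    rw [rpow_add hx, rpow_one]
  linear_combination αm1 * hinv - α2 * hpow

theorem sq_abs_mul_rpow_le {s σ x : ℝ} (hs : 0 ≤ s) (hsσ : s ≤ σ) (hx : 0 < x) (θ : ℝ) :
    |s * x ^ θ| ^ 2 ≤ σ ^ 2 * x ^ (2 * θ) := by
  have hsq : (x ^ θ) ^ 2 = x ^ (2 * θ) := by
    rw [← rpow_natCast, ← rpow_mul hx.le, mul_comm]; norm_num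
  rw [sq_abs, mul_pow, hsq]
  gcongr

theorem khasminskii_condition_general
    (αm1 α0 α1 α2 σ ρ θ : ℝ)
    (hαm1 : 0 < αm1) (hα0 : 0 < α0) (hα1 : 0 < α1) (hα2 : 0 < α2)
    (hθ : 1 < θ) (hstruct : 1 + ρ > 2 * θ)
    (φ : ℝ → ℝ) (hφpos : ∀ y : ℝ, 0 < y → 0 < φ y) (hφ : ∀ y : ℝ, 0 < y → φ y ≤ σ) :
    ∀ p : ℝ, 2 ≤ p → ∃ K₄ : ℝ, 0 < K₄ ∧
      ∀ x y : ℝ, 0 < x → 0 < y →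
        x * (αm1 * x ^ (-1 : ℝ) - α0 + α1 * x - α2 * x ^ ρ)
          + ((p - 1) / 2) * |φ y * x ^ θ| ^ 2 ≤ K₄ * (1 + x ^ 2) := by
  intro p hp
  have hp' : 0 ≤ (p - 1) / 2 := by linarith
  obtain ⟨K, hK, hdom⟩ := exists_mul_rpow_sub_mul_rpow_le (by linarith : (0 : ℝ) ≤ 2 * θ)
    hstruct (mul_nonneg hp' (sq_nonneg σ)) hα2
  refine ⟨αm1 + α1 + K + 1, by positivity, fun x y hx hy => ?_⟩
  have hdiff : (p - 1) / 2 * |φ y * x ^ θ| ^ 2 ≤ (p - 1) / 2 * σ ^ 2 * x ^ (2 * θ) := by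
    rw [mul_assoc]
    exact mul_le_mul_of_nonneg_left
      (sq_abs_mul_rpow_le (hφpos y hy).le (hφ y hy) hx θ) hp'
  rw [mul_ait_sahalia_drift hx]
  nlinarith [hdom x hx, sq_nonneg x, mul_pos hα0 hx]

theorem khasminskii_condition
    (αm1 α0 α1 α2 σ ρ θ : ℝ)
    (hαm1 : 0 < αm1) (hα0 : 0 < α0) (hα1 : 0 < α1) (hα2 : 0 < α2) (hσ : 0 < σ)
    (hρ : 1 < ρ) (hθ : 1 < θ) (hstruct : 1 + ρ > 2 * θ)
    (φ : ℝ → ℝ) (hφpos : ∀ y : ℝ, 0 < y → 0 < φ y) (hφ : ∀ y : ℝ, 0 < y → φ y ≤ σ) :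
    ∀ p : ℝ, 2 ≤ p → ∃ K₄ : ℝ, 0 < K₄ ∧
      ∀ x y : ℝ, 0 < x → 0 < y →
        x * (αm1 * x ^ (-1 : ℝ) - α0 + α1 * x - α2 * x ^ ρ)
          + ((p - 1) / 2) * |φ y * x ^ θ| ^ 2 ≤ K₄ * (1 + x ^ 2) :=
  khasminskii_condition_general αm1 α0 α1 α2 σ ρ θ hαm1 hα0 hα1 hα2 hθ hstruct φ hφpos hφ
end

section
/- Let f(x) = α₋₁ x^{−1} − α₀ + α₁ x − α₂ x^ρ and g(x) = x^θ with α₋₁, α₀, α₁, α₂ > 0, ρ, θ > 1, 1 + ρ > 2θ, and let φ be bounded by σ > 0. Let f_Δ, g_Δ be the truncated versions of f, g (truncating the argument to the interval [1/μ⁻¹(π(Δ)), μ⁻¹(π(Δ))] with μ⁻¹(π(Δ)) > 1). Then for every p ≥ 2 there exists a constant K₅, independent of Δ, such that x f_Δ(x) + ((p−1)/2)|φ(y) g_Δ(x)|² ≤ K₅(1 + x²) for all x ∈ ℝ and y > 0. -/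
/-!
Write `c = max (1/N) (min x N)` for the truncated argument of the drift. For `x ≥ 0` the
truncation keeps `c` between `min x 1` and `max x 1`, so `x/c ≤ 1 + x` and `x c ≤ 1 + x²`, while
the diffusion term grows like `m^(2θ)` with `m = min x N ≤ c`. Since `2θ < 1 + ρ`, it is absorbed
by the restoring term `α₂ x c^ρ ≥ α₂ m^(1+ρ)` up to an additive constant which depends on
`p`, `σ`, `α₂` but not on `N`. For `x < 0` the drift is evaluated at `c = 1/N ≤ 1`, where it is
bounded below by `-(α₀ + α₂)`, and the diffusion vanishes.
-/

open Real

lemma exists_mul_rpow_le_mul_rpow_add {A B s t : ℝ} (hB : 0 < B) (hs : 0 ≤ s) (hst : s < t) :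
    ∃ C : ℝ, 0 ≤ C ∧ ∀ m : ℝ, 0 ≤ m → A * m ^ s ≤ B * m ^ t + C := by
  set M := max 1 ((|A| / B) ^ (t - s)⁻¹)
  have hM : 0 ≤ M := zero_le_one.trans (le_max_left _ _)
  have hAM : |A| ≤ B * M ^ (t - s) := by
    rw [← div_le_iff₀' hB]
    calc |A| / B = ((|A| / B) ^ (t - s)⁻¹) ^ (t - s) := by
          rw [← rpow_mul (by positivity), inv_mul_cancel₀ (by linarith), rpow_one]
      _ ≤ M ^ (t - s) := rpow_le_rpow (by positivity) (le_max_right _ _) (by linarith)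
  refine ⟨|A| * M ^ s, by positivity, fun m hm => ?_⟩
  have hAm : A * m ^ s ≤ |A| * m ^ s := mul_le_mul_of_nonneg_right (le_abs_self A) (by positivity)
  rcases le_or_gt m M with hmM | hMm
  · calc A * m ^ s ≤ |A| * M ^ s := hAm.trans (by gcongr)
      _ ≤ B * m ^ t + |A| * M ^ s := le_add_of_nonneg_left (by positivity)
  · have hm0 : 0 < m := hM.trans_lt hMm
    calc A * m ^ s ≤ B * M ^ (t - s) * m ^ s := hAm.trans (by gcongr)
      _ ≤ B * m ^ (t - s) * m ^ s := by gcongr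
      _ = B * m ^ t := by rw [mul_assoc, ← rpow_add hm0, sub_add_cancel]
      _ ≤ B * m ^ t + |A| * M ^ s := le_add_of_nonneg_right (by positivity)

lemma rpow_one_add_le_mul_rpow {m x c ρ : ℝ} (hm : 0 ≤ m) (hmx : m ≤ x) (hmc : m ≤ c)
    (hρ : 0 ≤ ρ) : m ^ (1 + ρ) ≤ x * c ^ ρ := by
  rw [rpow_add' hm (by linarith), rpow_one]
  exact mul_le_mul hmx (rpow_le_rpow hm hmc hρ) (by positivity) (hm.trans hmx)

lemma mul_sq_abs_mul_rpow_le {k a σ m θ : ℝ} (hk : 0 ≤ k) (ha : |a| ≤ σ) (hm : 0 ≤ m) :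
    k * |a * m ^ θ| ^ 2 ≤ k * σ ^ 2 * m ^ (2 * θ) := by
  rw [mul_comm 2 θ, rpow_mul hm, rpow_two, mul_assoc, ← mul_pow, abs_mul, abs_of_nonneg
    (rpow_nonneg hm θ)]
  gcongr

lemma max_one_div_min_pos {N : ℝ} (hN : 0 < N) (x : ℝ) : 0 < max (1 / N) (min x N) :=
  lt_max_of_lt_left (by positivity)

lemma min_one_le_max_one_div_min {N : ℝ} (hN : 1 ≤ N) (x : ℝ) :
    min x 1 ≤ max (1 / N) (min x N) :=
  (min_le_min_left x hN).trans (le_max_right _ _)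

lemma max_one_div_min_le_max_one {N : ℝ} (hN : 1 ≤ N) (x : ℝ) :
    max (1 / N) (min x N) ≤ max x 1 :=
  max_le ((div_le_one (by linarith)).mpr hN |>.trans (le_max_right _ _))
    ((min_le_left _ _).trans (le_max_left _ _))

lemma mul_inv_le_one_add {x c : ℝ} (hx : 0 ≤ x) (hc : 0 < c) (hxc : min x 1 ≤ c) :
    x * c⁻¹ ≤ 1 + x := by
  rcases le_total x 1 with hx1 | hx1
  · have : x * c⁻¹ ≤ 1 := by
      rw [← div_eq_mul_inv, div_le_one hc]
      exact (min_eq_left hx1).symm.le.trans hxc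
    linarith
  · have : c⁻¹ ≤ 1 := inv_le_one_of_one_le₀ ((min_eq_right hx1).symm.le.trans hxc)
    nlinarith

lemma mul_le_one_add_sq {x c : ℝ} (hx : 0 ≤ x) (hcx : c ≤ max x 1) : x * c ≤ 1 + x ^ 2 := by
  rcases le_total x 1 with hx1 | hx1
  · rw [max_eq_right hx1] at hcx
    nlinarith
  · rw [max_eq_left hx1] at hcx
    nlinarith

section AitSahalia

variable (αm1 α0 α1 α2 ρ : ℝ)

noncomputable def aitSahaliaDrift (z : ℝ) : ℝ := αm1 * z ^ (-1 : ℝ) - α0 + α1 * z - α2 * z ^ ρ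

variable {αm1 α0 α1 α2 ρ}

lemma mul_aitSahaliaDrift_le_of_nonneg (hαm1 : 0 ≤ αm1) (hα0 : 0 ≤ α0) (hα1 : 0 ≤ α1)
    {x c : ℝ} (hx : 0 ≤ x) (hc : 0 < c) (hxc : min x 1 ≤ c) (hcx : c ≤ max x 1) :
    x * aitSahaliaDrift αm1 α0 α1 α2 ρ c ≤ (2 * αm1 + α1) * (1 + x ^ 2) - α2 * (x * c ^ ρ) := by
  have hinv := mul_le_mul_of_nonneg_left (mul_inv_le_one_add hx hc hxc) hαm1
  have hmul := mul_le_mul_of_nonneg_left (mul_le_one_add_sq hx hcx) hα1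
  have hx2 : x ≤ 1 + x ^ 2 := by nlinarith [sq_nonneg (x - 1)]
  rw [aitSahaliaDrift, rpow_neg_one]
  nlinarith [mul_nonneg hα0 hx]

lemma aitSahaliaDrift_ge_of_le_one (hαm1 : 0 ≤ αm1) (hα1 : 0 ≤ α1) (hα2 : 0 ≤ α2) (hρ : 0 ≤ ρ)
    {c : ℝ} (hc : 0 < c) (hc1 : c ≤ 1) : -(α0 + α2) ≤ aitSahaliaDrift αm1 α0 α1 α2 ρ c := by
  have hcρ : α2 * c ^ ρ ≤ α2 := mul_le_of_le_one_right hα2 (rpow_le_one hc.le hc1 hρ)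
  rw [aitSahaliaDrift]
  have : 0 ≤ αm1 * c ^ (-1 : ℝ) := by positivity
  nlinarith

lemma mul_aitSahaliaDrift_le_of_neg (hαm1 : 0 ≤ αm1) (hα0 : 0 ≤ α0) (hα1 : 0 ≤ α1)
    (hα2 : 0 ≤ α2) (hρ : 0 ≤ ρ) {x c : ℝ} (hx : x < 0) (hc : 0 < c) (hc1 : c ≤ 1) :
    x * aitSahaliaDrift αm1 α0 α1 α2 ρ c ≤ (α0 + α2) * (1 + x ^ 2) := by
  have := mul_le_mul_of_nonpos_left
    (aitSahaliaDrift_ge_of_le_one (α0 := α0) hαm1 hα1 hα2 hρ hc hc1) hx.le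
  nlinarith [sq_nonneg (x + 1)]

end AitSahalia

theorem truncated_khasminskii_general
    (αm1 α0 α1 α2 σ ρ θ : ℝ)
    (hαm1 : 0 < αm1) (hα0 : 0 < α0) (hα1 : 0 < α1) (hα2 : 0 < α2)
    (hθ : 1 < θ) (hstruct : 1 + ρ > 2 * θ)
    (φ : ℝ → ℝ) (hφpos : ∀ y : ℝ, 0 < y → 0 < φ y) (hφ : ∀ y : ℝ, 0 < y → φ y ≤ σ) :
    ∀ p : ℝ, 2 ≤ p → ∃ K₅ : ℝ, 0 < K₅ ∧
      ∀ N : ℝ, 1 < N → ∀ x y : ℝ, 0 < y →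
        (let f : ℝ → ℝ := fun z => αm1 * z ^ (-1 : ℝ) - α0 + α1 * z - α2 * z ^ ρ
         let fΔ : ℝ → ℝ := fun z => f (max (1 / N) (min z N))
         let gΔ : ℝ → ℝ := fun z => if 0 ≤ z then (min z N) ^ θ else 0
         x * fΔ x + ((p - 1) / 2) * |φ y * gΔ x| ^ 2) ≤ K₅ * (1 + x ^ 2) := by
  intro p hp
  obtain ⟨C, hC, hCbound⟩ := exists_mul_rpow_le_mul_rpow_add (A := (p - 1) / 2 * σ ^ 2) hα2
    (by linarith : (0 : ℝ) ≤ 2 * θ) hstruct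
  refine ⟨2 * αm1 + α0 + α1 + α2 + C, by positivity, fun N hN x y hy => ?_⟩
  set c := max (1 / N) (min x N)
  have hc : 0 < c := max_one_div_min_pos (by linarith) x
  show x * aitSahaliaDrift αm1 α0 α1 α2 ρ c
    + (p - 1) / 2 * |φ y * if 0 ≤ x then (min x N) ^ θ else 0| ^ 2 ≤ _
  rcases le_or_gt 0 x with hx | hx
  · rw [if_pos hx]
    have hm : 0 ≤ min x N := le_min hx (by linarith)
    have hdrift := mul_aitSahaliaDrift_le_of_nonneg (α2 := α2) (ρ := ρ) hαm1.le hα0.le hα1.le hx hc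
      (min_one_le_max_one_div_min hN.le x) (max_one_div_min_le_max_one hN.le x)
    have hdiffusion : (p - 1) / 2 * |φ y * (min x N) ^ θ| ^ 2 ≤ α2 * (x * c ^ ρ) + C :=
      calc (p - 1) / 2 * |φ y * (min x N) ^ θ| ^ 2
          ≤ (p - 1) / 2 * σ ^ 2 * (min x N) ^ (2 * θ) :=
            mul_sq_abs_mul_rpow_le (by linarith)
              ((abs_of_pos (hφpos y hy)).trans_le (hφ y hy)) hm
        _ ≤ α2 * (min x N) ^ (1 + ρ) + C := hCbound _ hm
        _ ≤ α2 * (x * c ^ ρ) + C := by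
            gcongr
            exact rpow_one_add_le_mul_rpow hm (min_le_left _ _) (le_max_right _ _) (by linarith)
    nlinarith
  · rw [if_neg hx.not_ge, mul_zero, abs_zero]
    have hc1 : c ≤ 1 :=
      (max_one_div_min_le_max_one hN.le x).trans_eq (max_eq_right (hx.le.trans zero_le_one))
    have hdrift := mul_aitSahaliaDrift_le_of_neg hαm1.le hα0.le hα1.le hα2.le
      (by linarith : 0 ≤ ρ) hx hc hc1
    nlinarith

/-- Khasminskii-type condition preserved by truncation, with constant independent of Δ
(equivalently, independent of the truncation level N = μ⁻¹(π(Δ)) > 1). -/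
theorem truncated_khasminskii
    (αm1 α0 α1 α2 σ ρ θ : ℝ)
    (hαm1 : 0 < αm1) (hα0 : 0 < α0) (hα1 : 0 < α1) (hα2 : 0 < α2) (hσ : 0 < σ)
    (hρ : 1 < ρ) (hθ : 1 < θ) (hstruct : 1 + ρ > 2 * θ)
    (φ : ℝ → ℝ) (hφpos : ∀ y : ℝ, 0 < y → 0 < φ y) (hφ : ∀ y : ℝ, 0 < y → φ y ≤ σ) :
    ∀ p : ℝ, 2 ≤ p → ∃ K₅ : ℝ, 0 < K₅ ∧
      ∀ N : ℝ, 1 < N → ∀ x y : ℝ, 0 < y →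
        (let f : ℝ → ℝ := fun z => αm1 * z ^ (-1 : ℝ) - α0 + α1 * z - α2 * z ^ ρ
         let fΔ : ℝ → ℝ := fun z => f (max (1 / N) (min z N))
         let gΔ : ℝ → ℝ := fun z => if 0 ≤ z then (min z N) ^ θ else 0
         x * fΔ x + ((p - 1) / 2) * |φ y * gΔ x| ^ 2) ≤ K₅ * (1 + x ^ 2) :=
  truncated_khasminskii_general αm1 α0 α1 α2 σ ρ θ hαm1 hα0 hα1 hα2 hθ hstruct φ hφpos hφ
end
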